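/- Incompleteness of the transition system without duplicated strict rules: Let D₀ be the basic defeasible theory with no facts, empty superiority relation, and exactly the two rules a → b (strict) and ⇒ a (defeasible, with empty body), where a and b are distinct atoms, interpreted with the standard (non-separated) proof theory in which σ and ∂ use R_sd. Then D₀ ⊢ +σb, but for every transition sequence (D₀, ∅) ⟹ ⋯ ⟹ (D', C') of the transition system, +σb ∉ C'. -/
import Mathlib


/-- A propositional literal: an atom or its negation. -/
inductive Lit where
  | pos : ℕ → Lit
  | neg : ℕ → Lit
deriving DecidableEq

/-- The complement ~q of a literal q. -/
def Lit.compl : Lit → Lit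
  | .pos n => .neg n
  | .neg n => .pos n

/-- The atom underlying a literal. -/
def Lit.atom : Lit → ℕ
  | .pos n => n
  | .neg n => n

/-- The three kinds of rules: strict (→), defeasible (⇒), defeater (⇝). -/
inductive RuleKind where
  | strict | defeasible | defeater
deriving DecidableEq

/-- A rule: a finite body of literals, a head literal, and a kind. -/
structure Rule where
  body : Finset Lit
  head : Lit
  kind : RuleKind
deriving DecidableEq

/-- A propositional defeasible theory: finite facts, finite rules, and an
acyclic superiority relation on rules. -/
structure DTheory where
  facts : Finset Lit
  rules : Finset Rule
  sup : Rule → Rule → Prop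
  sup_acyclic : ∀ r, ¬ Relation.TransGen sup r r

/-- Tagged literals (extended conclusions): tags ±Δ, ±∂, ±σ. -/
inductive TaggedLit where
  | pDelta : Lit → TaggedLit
  | mDelta : Lit → TaggedLit
  | pPartial : Lit → TaggedLit
  | mPartial : Lit → TaggedLit
  | pSigma : Lit → TaggedLit
  | mSigma : Lit → TaggedLit
deriving DecidableEq

/-- The literal of a tagged literal. -/
def TaggedLit.lit : TaggedLit → Lit
  | .pDelta q => q
  | .mDelta q => q
  | .pPartial q => q
  | .mPartial q => q
  | .pSigma q => q
  | .mSigma q => q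

/-- Tagged literals whose tag is among +Δ, −Δ, +∂, −∂ (conclusions proper). -/
def TaggedLit.IsConclusionTag : TaggedLit → Prop
  | .pDelta _ => True
  | .mDelta _ => True
  | .pPartial _ => True
  | .mPartial _ => True
  | .pSigma _ => False
  | .mSigma _ => False

/-- R_s[q]: strict rules with head q. -/
def DTheory.Rs (D : DTheory) (q : Lit) : Set Rule :=
  {r | r ∈ D.rules ∧ r.kind = RuleKind.strict ∧ r.head = q}

/-- R_sd[q]: strict and defeasible rules with head q. -/
def DTheory.Rsd (D : DTheory) (q : Lit) : Set Rule :=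
  {r | r ∈ D.rules ∧ r.kind ≠ RuleKind.defeater ∧ r.head = q}

/-- R_d[q]: defeasible rules with head q. -/
def DTheory.Rd (D : DTheory) (q : Lit) : Set Rule :=
  {r | r ∈ D.rules ∧ r.kind = RuleKind.defeasible ∧ r.head = q}

/-- R[q]: all rules with head q. -/
def DTheory.Rall (D : DTheory) (q : Lit) : Set Rule :=
  {r | r ∈ D.rules ∧ r.head = q}

/-- The rules used for defeasible provability (tags ±∂, ±σ): under separated
reasoning (`sep = true`) these are the defeasible rules R_d[q]; under the
standard interpretation (`sep = false`) they are R_sd[q]. -/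
def DTheory.RD (D : DTheory) (sep : Bool) (q : Lit) : Set Rule :=
  if sep then D.Rd q else D.Rsd q

/-- `Step sep D S c` holds iff the tagged literal `c` may be appended to a
derivation in `D` whose set of preceding lines is `S`, by one of the inference
rules (±Δ, ±∂, ±σ).  `sep` selects separated reasoning. -/
inductive Step (sep : Bool) (D : DTheory) (S : Set TaggedLit) : TaggedLit → Prop
  | plusDelta (q : Lit) :
      (q ∈ D.facts ∨ ∃ r ∈ D.Rs q, ∀ a ∈ r.body, TaggedLit.pDelta a ∈ S) →
      Step sep D S (TaggedLit.pDelta q)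
  | minusDelta (q : Lit) :
      q ∉ D.facts →
      (∀ r ∈ D.Rs q, ∃ a ∈ r.body, TaggedLit.mDelta a ∈ S) →
      Step sep D S (TaggedLit.mDelta q)
  | plusPartial (q : Lit) :
      (TaggedLit.pDelta q ∈ S ∨
        ((∃ r ∈ D.RD sep q, ∀ a ∈ r.body, TaggedLit.pPartial a ∈ S) ∧
         TaggedLit.mDelta q.compl ∈ S ∧
         (∀ s ∈ D.Rall q.compl,
            (∃ a ∈ s.body, TaggedLit.mPartial a ∈ S) ∨
            (∃ t ∈ D.RD sep q, D.sup t s ∧ ∀ a ∈ t.body, TaggedLit.pPartial a ∈ S)))) →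
      Step sep D S (TaggedLit.pPartial q)
  | minusPartial (q : Lit) :
      TaggedLit.mDelta q ∈ S →
      ((∀ r ∈ D.RD sep q, ∃ a ∈ r.body, TaggedLit.mPartial a ∈ S) ∨
       TaggedLit.pDelta q.compl ∈ S ∨
       (∃ s ∈ D.Rall q.compl,
          (∀ a ∈ s.body, TaggedLit.pPartial a ∈ S) ∧
          (∀ t ∈ D.RD sep q,
             (∃ a ∈ t.body, TaggedLit.mPartial a ∈ S) ∨ ¬ D.sup t s))) →
      Step sep D S (TaggedLit.mPartial q)
  | plusSigma (q : Lit) :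
      (∃ r ∈ D.RD sep q, ∀ a ∈ r.body, TaggedLit.pPartial a ∈ S) →
      Step sep D S (TaggedLit.pSigma q)
  | minusSigma (q : Lit) :
      (∀ r ∈ D.RD sep q, ∃ a ∈ r.body, TaggedLit.mPartial a ∈ S) →
      Step sep D S (TaggedLit.mSigma q)

/-- Derivations: finite sequences of tagged literals, each justified by its
predecessors via the inference rules. -/
inductive IsDerivation (sep : Bool) (D : DTheory) : List TaggedLit → Prop
  | nil : IsDerivation sep D []
  | snoc (P : List TaggedLit) (c : TaggedLit) :
      IsDerivation sep D P → Step sep D {x | x ∈ P} c →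
      IsDerivation sep D (P ++ [c])

/-- D ⊢ c : the tagged literal c occurs in some derivation in D. -/
def Proves (sep : Bool) (D : DTheory) (c : TaggedLit) : Prop :=
  ∃ P, IsDerivation sep D P ∧ c ∈ P

/-- A basic defeasible theory: no defeaters and an empty superiority relation. -/
def DTheory.Basic (D : DTheory) : Prop :=
  (∀ r ∈ D.rules, r.kind ≠ RuleKind.defeater) ∧ (∀ r s : Rule, ¬ D.sup r s)

/-- D has duplicated strict rules: every strict rule has a defeasible copy. -/
def DTheory.DupStrictRules (D : DTheory) : Prop :=
  ∀ r ∈ D.rules, r.kind = RuleKind.strict →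
    Rule.mk r.body r.head RuleKind.defeasible ∈ D.rules

/-- The literals of the (finite) language of D: all literals over atoms
occurring in D. -/
def DTheory.lits (D : DTheory) : Set Lit :=
  {l | (∃ f ∈ D.facts, f.atom = l.atom) ∨
       ∃ r ∈ D.rules, r.head.atom = l.atom ∨ ∃ a ∈ r.body, a.atom = l.atom}

/-- The transition system on states (D, C).  `L` is the set of literals of the
language of the original theory, over which q ranges in transitions (1)–(6). -/
inductive DLTrans (L : Set Lit) : DTheory × Set TaggedLit → DTheory × Set TaggedLit → Prop
  | t1 (D : DTheory) (C : Set TaggedLit) (q : Lit) :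
      q ∈ L →
      (q ∈ D.facts ∨
        ∃ r ∈ D.rules, r.kind = RuleKind.strict ∧ r.head = q ∧ r.body = ∅) →
      DLTrans L (D, C)
        (D, C ∪ {TaggedLit.pDelta q, TaggedLit.pPartial q, TaggedLit.pSigma q})
  | t2 (D : DTheory) (C : Set TaggedLit) (q : Lit) :
      q ∈ L →
      (∃ r ∈ D.rules, r.kind = RuleKind.defeasible ∧ r.head = q ∧ r.body = ∅) →
      DLTrans L (D, C) (D, insert (TaggedLit.pSigma q) C)
  | t3 (D : DTheory) (C : Set TaggedLit) (q : Lit) :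
      q ∈ L →
      (∀ r ∈ D.rules, ¬(r.kind = RuleKind.strict ∧ r.head = q)) →
      q ∉ D.facts →
      DLTrans L (D, C) (D, insert (TaggedLit.mDelta q) C)
  | t4 (D : DTheory) (C : Set TaggedLit) (q : Lit) :
      q ∈ L →
      (∀ r ∈ D.rules, r.head ≠ q) →
      DLTrans L (D, C) (D, insert (TaggedLit.mSigma q) C)
  | t5 (D : DTheory) (C : Set TaggedLit) (q : Lit) :
      q ∈ L →
      (TaggedLit.pDelta q ∈ C ∨
        (TaggedLit.pSigma q ∈ C ∧ TaggedLit.mDelta q.compl ∈ C ∧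
         TaggedLit.mSigma q.compl ∈ C)) →
      DLTrans L (D, C) (D, insert (TaggedLit.pPartial q) C)
  | t6 (D : DTheory) (C : Set TaggedLit) (q : Lit) :
      q ∈ L →
      TaggedLit.mDelta q ∈ C →
      (TaggedLit.pDelta q.compl ∈ C ∨ TaggedLit.pSigma q.compl ∈ C ∨
       TaggedLit.mSigma q ∈ C) →
      DLTrans L (D, C) (D, insert (TaggedLit.mPartial q) C)
  | t7 (D : DTheory) (C : Set TaggedLit) (r : Rule) (q : Lit) :
      r ∈ D.rules → r.kind = RuleKind.strict → q ∈ r.body →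
      TaggedLit.pDelta q ∈ C →
      DLTrans L (D, C)
        (⟨D.facts, insert (Rule.mk (r.body.erase q) r.head r.kind) (D.rules.erase r),
          D.sup, D.sup_acyclic⟩, C)
  | t8 (D : DTheory) (C : Set TaggedLit) (r : Rule) (q : Lit) :
      r ∈ D.rules → r.kind = RuleKind.defeasible → q ∈ r.body →
      TaggedLit.pPartial q ∈ C →
      DLTrans L (D, C)
        (⟨D.facts, insert (Rule.mk (r.body.erase q) r.head r.kind) (D.rules.erase r),
          D.sup, D.sup_acyclic⟩, C)
  | t9 (D : DTheory) (C : Set TaggedLit) (r : Rule) (q : Lit) :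
      r ∈ D.rules → r.kind = RuleKind.strict → q ∈ r.body →
      TaggedLit.mDelta q ∈ C →
      DLTrans L (D, C) (⟨D.facts, D.rules.erase r, D.sup, D.sup_acyclic⟩, C)
  | t10 (D : DTheory) (C : Set TaggedLit) (r : Rule) (q : Lit) :
      r ∈ D.rules → r.kind = RuleKind.defeasible → q ∈ r.body →
      TaggedLit.mPartial q ∈ C →
      DLTrans L (D, C) (⟨D.facts, D.rules.erase r, D.sup, D.sup_acyclic⟩, C)

/-- (D, C) ⟹̸ : every applicable transition leaves the state unchanged. -/
def Stuck (L : Set Lit) (s : DTheory × Set TaggedLit) : Prop :=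
  ∀ s', DLTrans L s s' → s' = s

/-- D derives C: some transition sequence from (D, ∅) reaches a stuck state
(D', C'), and C is the set of members of C' with tags among +Δ, −Δ, +∂, −∂. -/
def Derives (D : DTheory) (C : Set TaggedLit) : Prop :=
  ∃ D' C', Relation.ReflTransGen (DLTrans D.lits) (D, (∅ : Set TaggedLit)) (D', C') ∧
    Stuck D.lits (D', C') ∧
    C = {c | c ∈ C' ∧ c.IsConclusionTag}

/-- Invariant for the incompleteness argument. -/
def Inv12 (a b : ℕ) (s : DTheory × Set TaggedLit) : Prop :=
  s.1.facts = ∅ ∧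
  (∀ r ∈ s.1.rules,
      (r.kind = RuleKind.strict ∧ r.head = Lit.pos b ∧ r.body = {Lit.pos a}) ∨
      (r.kind = RuleKind.defeasible ∧ r.head = Lit.pos a)) ∧
  TaggedLit.pDelta (Lit.pos a) ∉ s.2 ∧
  TaggedLit.pSigma (Lit.pos b) ∉ s.2

lemma Inv12_preserved (a b : ℕ) (hab : a ≠ b) (L : Set Lit)
    (s s' : DTheory × Set TaggedLit) (hinv : Inv12 a b s)
    (h : DLTrans L s s') : Inv12 a b s' := by
  obtain ⟨hf, hr, hd, hs⟩ := hinv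
  cases h with
  | t1 D C q hq hcond =>
      exfalso
      rcases hcond with hfact | ⟨r, hrmem, hk, hh, hb⟩
      · rw [hf] at hfact; exact absurd hfact (Finset.notMem_empty q)
      · rcases hr r hrmem with ⟨_, _, hb'⟩ | ⟨hk', _⟩
        · rw [hb'] at hb; exact absurd hb (by simp)
        · rw [hk] at hk'; exact RuleKind.noConfusion hk'
  | t2 D C q hq hcond =>
      obtain ⟨r, hrmem, hk, hh, hb⟩ := hcond
      have hq' : q = Lit.pos a := by
        rcases hr r hrmem with ⟨hk', _, _⟩ | ⟨_, hh'⟩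
        · rw [hk] at hk'; exact RuleKind.noConfusion hk'
        · rw [← hh, hh']
      refine ⟨hf, hr, ?_, ?_⟩
      · intro hmem
        rcases hmem with h1 | h1
        · exact TaggedLit.noConfusion h1
        · exact hd h1
      · intro hmem
        rcases hmem with h1 | h1
        · rw [hq'] at h1
          exact hab (Lit.pos.inj (TaggedLit.pSigma.inj h1)).symm
        · exact hs h1
  | t3 D C q hq h1 h2 =>
      refine ⟨hf, hr, ?_, ?_⟩
      · intro h
        rcases h with h | h
        · exact TaggedLit.noConfusion h
        · exact hd h
      · intro h
        rcases h with h | h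
        · exact TaggedLit.noConfusion h
        · exact hs h
  | t4 D C q hq h1 =>
      refine ⟨hf, hr, ?_, ?_⟩
      · intro h
        rcases h with h | h
        · exact TaggedLit.noConfusion h
        · exact hd h
      · intro h
        rcases h with h | h
        · exact TaggedLit.noConfusion h
        · exact hs h
  | t5 D C q hq h1 =>
      refine ⟨hf, hr, ?_, ?_⟩
      · intro h
        rcases h with h | h
        · exact TaggedLit.noConfusion h
        · exact hd h
      · intro h
        rcases h with h | h
        · exact TaggedLit.noConfusion h
        · exact hs h
  | t6 D C q hq h1 h2 =>
      refine ⟨hf, hr, ?_, ?_⟩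
      · intro h
        rcases h with h | h
        · exact TaggedLit.noConfusion h
        · exact hd h
      · intro h
        rcases h with h | h
        · exact TaggedLit.noConfusion h
        · exact hs h
  | t7 D C r q hrmem hk hqb hdel =>
      exfalso
      rcases hr r hrmem with ⟨_, _, hb⟩ | ⟨hk', _⟩
      · rw [hb] at hqb
        rw [Finset.mem_singleton.mp hqb] at hdel
        exact hd hdel
      · rw [hk] at hk'; exact RuleKind.noConfusion hk'
  | t8 D C r q hrmem hk hqb hpp =>
      refine ⟨hf, ?_, hd, hs⟩
      intro r' hr'
      rcases Finset.mem_insert.mp hr' with h1 | h1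
      · rcases hr r hrmem with ⟨hk', _, _⟩ | ⟨hk', hh'⟩
        · rw [hk] at hk'; exact absurd hk' (by simp)
        · right; rw [h1]; exact ⟨by simpa using hk', by simpa using hh'⟩
      · exact hr r' (Finset.mem_of_mem_erase h1)
  | t9 D C r q hrmem hk hqb hdel =>
      exact ⟨hf, fun r' hr' => hr r' (Finset.mem_of_mem_erase hr'), hd, hs⟩
  | t10 D C r q hrmem hk hqb hpp =>
      exact ⟨hf, fun r' hr' => hr r' (Finset.mem_of_mem_erase hr'), hd, hs⟩


lemma Inv12_reach (a b : ℕ) (hab : a ≠ b) (L : Set Lit)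
    (s s' : DTheory × Set TaggedLit) (h0 : Inv12 a b s)
    (h : Relation.ReflTransGen (DLTrans L) s s') : Inv12 a b s' := by
  induction h with
  | refl => exact h0
  | tail _ hstep ih => exact Inv12_preserved a b hab L _ _ ih hstep

/-- Incompleteness without duplicated strict rules: for the
basic theory D with no facts, empty superiority relation and exactly the rules
a → b (strict) and ⇒ a (defeasible, empty body), with a ≠ b, the standard
(non-separated) proof theory proves +σb, but no transition sequence from
(D, ∅) ever puts +σb in the conclusion set. -/
theorem transition_system_incomplete (a b : ℕ) (hab : a ≠ b) (D : DTheory)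
    (hfacts : D.facts = ∅)
    (hrules : D.rules =
      {Rule.mk {Lit.pos a} (Lit.pos b) RuleKind.strict,
       Rule.mk ∅ (Lit.pos a) RuleKind.defeasible})
    (hsup : ∀ r s : Rule, ¬ D.sup r s) :
    Proves false D (TaggedLit.pSigma (Lit.pos b)) ∧
    ∀ (D' : DTheory) (C' : Set TaggedLit),
      Relation.ReflTransGen (DLTrans D.lits) (D, (∅ : Set TaggedLit)) (D', C') →
      TaggedLit.pSigma (Lit.pos b) ∉ C' := by
  constructor
  · -- D ⊢ +σb
    refine ⟨[TaggedLit.mDelta (Lit.neg a), TaggedLit.pPartial (Lit.pos a),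
             TaggedLit.pSigma (Lit.pos b)], ?_, by simp⟩
    have hnoheadnegA : ∀ r ∈ D.rules, r.head ≠ Lit.neg a := by
      intro r hr
      rw [hrules] at hr
      rcases Finset.mem_insert.mp hr with h | h
      · rw [h]; simp
      · rw [Finset.mem_singleton.mp h]; simp
    have step1 : Step false D {x | x ∈ ([] : List TaggedLit)}
        (TaggedLit.mDelta (Lit.neg a)) := by
      apply Step.minusDelta
      · rw [hfacts]; exact Finset.notMem_empty _
      · rintro r ⟨hmem, _, hh⟩
        exact absurd hh (hnoheadnegA r hmem)
    have step2 : Step false D {x | x ∈ [TaggedLit.mDelta (Lit.neg a)]}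
        (TaggedLit.pPartial (Lit.pos a)) := by
      apply Step.plusPartial
      right
      refine ⟨⟨Rule.mk ∅ (Lit.pos a) RuleKind.defeasible, ?_, by simp⟩, by simp [Lit.compl], ?_⟩
      · simp [DTheory.RD, DTheory.Rsd, hrules]
      · rintro s ⟨hmem, hh⟩
        exact absurd hh (hnoheadnegA s hmem)
    have step3 : Step false D
        {x | x ∈ [TaggedLit.mDelta (Lit.neg a), TaggedLit.pPartial (Lit.pos a)]}
        (TaggedLit.pSigma (Lit.pos b)) := by
      apply Step.plusSigma
      refine ⟨Rule.mk {Lit.pos a} (Lit.pos b) RuleKind.strict, ?_, ?_⟩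
      · simp [DTheory.RD, DTheory.Rsd, hrules]
      · intro x hx
        rw [Finset.mem_singleton.mp hx]
        simp
    show IsDerivation false D
      ([TaggedLit.mDelta (Lit.neg a), TaggedLit.pPartial (Lit.pos a)] ++
        [TaggedLit.pSigma (Lit.pos b)])
    apply IsDerivation.snoc _ _ _ step3
    show IsDerivation false D ([TaggedLit.mDelta (Lit.neg a)] ++ [TaggedLit.pPartial (Lit.pos a)])
    apply IsDerivation.snoc _ _ _ step2
    show IsDerivation false D ([] ++ [TaggedLit.mDelta (Lit.neg a)])
    exact IsDerivation.snoc _ _ IsDerivation.nil step1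
  · -- the transition system never produces +σb
    intro D' C' hreach hmem
    have h0 : Inv12 a b (D, (∅ : Set TaggedLit)) := by
      refine ⟨hfacts, ?_, Set.notMem_empty _, Set.notMem_empty _⟩
      intro r hr
      rw [hrules] at hr
      rcases Finset.mem_insert.mp hr with h | h
      · left; rw [h]; exact ⟨rfl, rfl, rfl⟩
      · right; rw [Finset.mem_singleton.mp h]; exact ⟨rfl, rfl⟩
    have hinv : Inv12 a b (D', C') :=
      Inv12_reach a b hab D.lits _ _ h0 hreach
    exact hinv.2.2.2 hmem
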